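/- arXiv:0806.4580 — 2 statements merged into one kernel-verified Lean document; each statement's English description precedes it below -/
import Mathlib

section
/- Let L₁ and L₂ be positive integers and suppose that S₁ ⊆ [0, L₁] and S₂ ⊆ [0, L₂] are sets of integers. If max{L₁, L₂} ≤ |S₁| + |S₂| - 2, then every integer g with L₁ + L₂ - (|S₁| + |S₂| - 2) ≤ g ≤ |S₁| + |S₂| - 2 lies in the sumset S₁ + S₂; that is, [L₁ + L₂ - (|S₁| + |S₂| - 2), |S₁| + |S₂| - 2] ⊆ S₁ + S₂. -/
/-!
Pigeonhole: `S₁` and `g - S₂` both lie in `[min 0 (g - L₂), max L₁ g]`, and for `g` in the given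
range each of the four possible lengths of that interval is at most `|S₁| + |S₂| - 2`, so the two
sets meet, i.e. `g = s₁ + s₂`.
-/

open Finset Pointwise

theorem Int.mem_add_of_card_Icc_lt {S₁ S₂ : Finset ℤ} {a b g : ℤ} (h₁ : S₁ ⊆ Icc a b)
    (h₂ : ∀ y ∈ S₂, g - y ∈ Icc a b) (hcard : #(Icc a b) < #S₁ + #S₂) :
    g ∈ S₁ + S₂ := by
  have hreflect : #(S₂.image (g - ·)) = #S₂ := card_image_of_injective _ sub_right_injective
  have hsub : S₂.image (g - ·) ⊆ Icc a b := by
    simpa only [image_subset_iff] using h₂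
  rw [← hreflect] at hcard
  obtain ⟨x, hx⟩ := inter_nonempty_of_card_lt_card_add_card h₁ hsub hcard
  obtain ⟨hx₁, hx₂⟩ := mem_inter.mp hx
  obtain ⟨y, hy, rfl⟩ := mem_image.mp hx₂
  simpa using add_mem_add hx₁ hy

theorem stmt_2_general (L₁ L₂ : ℤ) (hL₁ : 0 < L₁)
    (S₁ S₂ : Finset ℤ) (hS₁ : S₁ ⊆ Finset.Icc 0 L₁) (hS₂ : S₂ ⊆ Finset.Icc 0 L₂)
    (hmax : max L₁ L₂ ≤ (S₁.card : ℤ) + (S₂.card : ℤ) - 2) :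
    Finset.Icc (L₁ + L₂ - ((S₁.card : ℤ) + (S₂.card : ℤ) - 2))
        ((S₁.card : ℤ) + (S₂.card : ℤ) - 2) ⊆ S₁ + S₂ := by
  intro g hg
  rw [mem_Icc] at hg
  refine Int.mem_add_of_card_Icc_lt (a := min 0 (g - L₂)) (b := max L₁ g) ?_ ?_ ?_
  · exact hS₁.trans (Icc_subset_Icc (min_le_left _ _) (le_max_left _ _))
  · intro y hy
    have hy' := mem_Icc.mp (hS₂ hy)
    rw [mem_Icc]
    omega
  · rw [Int.card_Icc]
    omega

theorem stmt_2 (L₁ L₂ : ℤ) (hL₁ : 0 < L₁) (hL₂ : 0 < L₂)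
    (S₁ S₂ : Finset ℤ) (hS₁ : S₁ ⊆ Finset.Icc 0 L₁) (hS₂ : S₂ ⊆ Finset.Icc 0 L₂)
    (hmax : max L₁ L₂ ≤ (S₁.card : ℤ) + (S₂.card : ℤ) - 2) :
    Finset.Icc (L₁ + L₂ - ((S₁.card : ℤ) + (S₂.card : ℤ) - 2))
        ((S₁.card : ℤ) + (S₂.card : ℤ) - 2) ⊆ S₁ + S₂ :=
  stmt_2_general L₁ L₂ hL₁ S₁ S₂ hS₁ hS₂ hmax
end

section
/- Let l ≥ 3 and m be integers with 1 ≤ m < l/2, set n := 2m + 2 and κ := ⌈(l-1)/(n-2)⌉ - 1, and let A := [0, m] ∪ [l - m, l]. Then the sum of 2κ copies of A satisfies 2κ·A = ⋃_{j=0}^{2κ} [j(l-m), j(l-m) + 2κm]. Moreover, if the fractional part of (l-1)/(n-2) is greater than 1/2, then 2κ·A does not contain a block of consecutive integers of length l, i.e., there is no integer a with {a, a+1, …, a+l} ⊆ 2κ·A. -/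
open Finset Pointwise

/-!
Write `A = [0, m] ∪ [d, d + m]` with `d = l - m`. By induction on `k`, the `k`-fold sumset of `A` is
the union of the blocks `[j d, j d + k m]` for `0 ≤ j ≤ k`: adding `[0, m]` to a block lengthens
it by `m`, adding `[d, d + m]` lengthens it and shifts it to the next one.

For `k = 2κ`, two consecutive blocks leave a gap as soon as `2κm + 1 < l - m`, which is what the
condition on the fractional part of `x = (l - 1)/(2m)` gives: since `κ = ⌈x⌉ - 1 = ⌊x⌋`, it says
`κ + 1/2 < x`. A block of `l + 1` consecutive integers starting in the `j`-th block has to run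
past its end, into that gap.
-/

lemma Int.Icc_add_Icc {a b c d : ℤ} (hab : a ≤ b) (hcd : c ≤ d) :
    Icc a b + Icc c d = Icc (a + c) (b + d) := by
  refine Subset.antisymm (Finset.Icc_add_Icc_subset _ _ _ _) fun x hx => ?_
  rw [mem_Icc] at hx
  rw [mem_add]
  exact ⟨min b (x - c), by simp only [mem_Icc]; omega, x - min b (x - c),
    by simp only [mem_Icc]; omega, by omega⟩

lemma Finset.biUnion_Icc_union_add_one {α : Type*} [DecidableEq α] (C : ℤ → Finset α) {a b : ℤ}
    (hab : a ≤ b) :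
    (Icc a b).biUnion (fun j => C j ∪ C (j + 1)) = (Icc a (b + 1)).biUnion C := by
  ext x
  simp only [mem_biUnion, mem_union, mem_Icc]
  constructor
  · rintro ⟨j, hj, hx | hx⟩
    · exact ⟨j, by omega, hx⟩
    · exact ⟨j + 1, by omega, hx⟩
  · rintro ⟨j, hj, hx⟩
    by_cases hjb : j ≤ b
    · exact ⟨j, by omega, Or.inl hx⟩
    · exact ⟨j - 1, by omega, Or.inr (by rwa [sub_add_cancel])⟩

lemma Finset.biUnion_add {ι α : Type*} [DecidableEq α] [Add α] (s : Finset ι) (t : ι → Finset α)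
    (u : Finset α) :
    s.biUnion t + u = s.biUnion (fun j => t j + u) := by
  ext x
  simp only [mem_add, mem_biUnion]
  grind

lemma sum_range_Icc_union_Icc (l m : ℤ) (hm : 0 ≤ m) (k : ℕ) :
    ∑ _i ∈ range k, (Icc 0 m ∪ Icc (l - m) l) =
      (Icc (0 : ℤ) k).biUnion (fun j => Icc (j * (l - m)) (j * (l - m) + k * m)) := by
  induction k with
  | zero => ext x; simp
  | succ k ih =>
    have hkm : 0 ≤ (k : ℤ) * m := by positivity
    have hblock (j : ℤ) :
        Icc (j * (l - m)) (j * (l - m) + k * m) + (Icc 0 m ∪ Icc (l - m) l) =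
          Icc (j * (l - m)) (j * (l - m) + (k + 1) * m) ∪
            Icc ((j + 1) * (l - m)) ((j + 1) * (l - m) + (k + 1) * m) := by
      rw [add_union, Int.Icc_add_Icc (by omega) hm, Int.Icc_add_Icc (by omega) (by omega)]
      congr 2 <;> ring
    rw [sum_range_succ, ih, biUnion_add]
    simp only [hblock, Nat.cast_succ]
    exact biUnion_Icc_union_add_one _ (Nat.cast_nonneg k)

lemma not_Icc_subset_biUnion_Icc (s : Finset ℤ) {d w L : ℤ} (hw : 0 ≤ w) (hwd : w + 1 < d)
    (hwL : w < L) (a : ℤ) :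
    ¬ Icc a (a + L) ⊆ s.biUnion (fun j => Icc (j * d) (j * d + w)) := by
  intro hsub
  have mem_block (z : ℤ) (hz : a ≤ z ∧ z ≤ a + L) : ∃ j, j * d ≤ z ∧ z ≤ j * d + w := by
    obtain ⟨j, -, hj⟩ := mem_biUnion.mp (hsub (mem_Icc.mpr hz))
    exact ⟨j, mem_Icc.mp hj⟩
  obtain ⟨j, hja, haj⟩ := mem_block a ⟨le_rfl, by omega⟩
  -- the first integer after the block containing `a` lies in no block
  obtain ⟨i, hi, hi'⟩ := mem_block (j * d + w + 1) ⟨by omega, by omega⟩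
  rcases le_or_gt i j with hij | hij
  · have : i * d ≤ j * d := mul_le_mul_of_nonneg_right hij (by omega)
    linarith
  · have : (j + 1) * d ≤ i * d := mul_le_mul_of_nonneg_right hij (by omega)
    linarith

lemma mul_lt_of_half_lt_fract {p q : ℤ} (hq : 0 < q) (h : 1 / 2 < Int.fract ((p : ℚ) / (2 * q))) :
    (2 * (⌈(p : ℚ) / (2 * q)⌉ - 1) + 1) * q < p := by
  have hceil := Int.ceil_sub_self_eq (ne_of_gt (one_half_pos.trans h))
  have hq' : (0 : ℚ) < 2 * q := by positivity
  have hlt : ((⌈(p : ℚ) / (2 * q)⌉ : ℚ) - 1 + 1 / 2) * (2 * q) < p := by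
    rw [← lt_div_iff₀ hq']
    linarith
  have key : (((2 * (⌈(p : ℚ) / (2 * q)⌉ - 1) + 1) * q : ℤ) : ℚ) < p := by push_cast; linarith
  exact_mod_cast key

theorem stmt_13_general (l m n κ : ℤ) (hl : 3 ≤ l) (hm : 1 ≤ m)
    (hn : n = 2 * m + 2)
    (hκ : κ = ⌈((l : ℚ) - 1) / ((n : ℚ) - 2)⌉ - 1)
    (A : Finset ℤ) (hA : A = Finset.Icc 0 m ∪ Finset.Icc (l - m) l) :
    (∑ _i ∈ Finset.range (2 * κ).toNat, A =
        (Finset.Icc (0 : ℤ) (2 * κ)).biUnion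
          (fun j => Finset.Icc (j * (l - m)) (j * (l - m) + 2 * κ * m))) ∧
      (Int.fract (((l : ℚ) - 1) / ((n : ℚ) - 2)) > 1 / 2 →
        ¬ ∃ a : ℤ, Finset.Icc a (a + l) ⊆ ∑ _i ∈ Finset.range (2 * κ).toNat, A) := by
  have hx : ((l : ℚ) - 1) / ((n : ℚ) - 2) = ((l - 1 : ℤ) : ℚ) / (2 * m) := by
    rw [hn]; push_cast; ring
  rw [hx] at hκ ⊢
  have hκ0 : 0 ≤ κ := by
    have hl1 : (0 : ℚ) < ((l - 1 : ℤ) : ℚ) := by exact_mod_cast (by omega : (0 : ℤ) < l - 1)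
    have hm0 : (0 : ℚ) < m := by exact_mod_cast hm
    have := Int.ceil_pos.mpr (div_pos hl1 (by positivity : (0 : ℚ) < 2 * m))
    omega
  have hsum : ∑ _i ∈ range (2 * κ).toNat, A =
      (Icc (0 : ℤ) (2 * κ)).biUnion (fun j => Icc (j * (l - m)) (j * (l - m) + 2 * κ * m)) := by
    rw [hA, sum_range_Icc_union_Icc l m (by omega), Int.toNat_of_nonneg (by omega)]
  refine ⟨hsum, fun hfrac ⟨a, ha⟩ => ?_⟩
  have hgap := mul_lt_of_half_lt_fract (by omega) hfrac
  rw [← hκ] at hgap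
  rw [hsum] at ha
  exact not_Icc_subset_biUnion_Icc _ (by positivity) (by linarith) (by linarith) a ha

theorem stmt_13 (l m n κ : ℤ) (hl : 3 ≤ l) (hm : 1 ≤ m) (hml : 2 * m < l)
    (hn : n = 2 * m + 2)
    (hκ : κ = ⌈((l : ℚ) - 1) / ((n : ℚ) - 2)⌉ - 1)
    (A : Finset ℤ) (hA : A = Finset.Icc 0 m ∪ Finset.Icc (l - m) l) :
    (∑ _i ∈ Finset.range (2 * κ).toNat, A =
        (Finset.Icc (0 : ℤ) (2 * κ)).biUnion
          (fun j => Finset.Icc (j * (l - m)) (j * (l - m) + 2 * κ * m))) ∧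
      (Int.fract (((l : ℚ) - 1) / ((n : ℚ) - 2)) > 1 / 2 →
        ¬ ∃ a : ℤ, Finset.Icc a (a + l) ⊆ ∑ _i ∈ Finset.range (2 * κ).toNat, A) :=
  stmt_13_general l m n κ hl hm hn hκ A hA
end
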